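/- The quantum Lipschitz constant recovers the classical Lipschitz constant on operators diagonal in the canonical basis: for any function f : [d]^n → ℝ, the diagonal operator F = Σ_{x ∈ [d]^n} f(x) |x⟩⟨x| satisfies ‖F‖_L = ‖f‖_L, where ‖f‖_L = max_{x ≠ y} |f(x) − f(y)| / h(x, y) is the Lipschitz constant of f with respect to the Hamming distance h. -/

import Mathlib

open scoped BigOperators
open scoped Classical
open scoped ComplexOrder

noncomputable section

namespace QW1

/-- Configurations of `n` qudits of local dimension `d`:
the index set of the canonical basis of `(ℂ^d)^{⊗ n}`. -/
abbrev Cfg (d n : ℕ) : Type := Fin n → Fin d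

/-- Linear operators on the Hilbert space of `n` qudits, represented as matrices
in the canonical basis. -/
abbrev Mat (d n : ℕ) : Type := Matrix (Cfg d n) (Cfg d n) ℂ

/-- The trace norm `‖A‖₁ = Tr √(Aᴴ A)`. -/
noncomputable def traceNorm {ι : Type} [Fintype ι] [DecidableEq ι] (A : Matrix ι ι ℂ) : ℝ :=
  (((Matrix.posSemidef_conjTranspose_mul_self A).1.eigenvectorUnitary.1 *
      Matrix.diagonal (fun i => ((Real.sqrt ((Matrix.posSemidef_conjTranspose_mul_self A).1.eigenvalues i) : ℝ) : ℂ)) *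
      (star (Matrix.posSemidef_conjTranspose_mul_self A).1.eigenvectorUnitary : Matrix ι ι ℂ)).trace).re

/-- The operator norm `‖A‖_∞`. -/
noncomputable def opNorm {ι : Type} [Fintype ι] [DecidableEq ι] (A : Matrix ι ι ℂ) : ℝ :=
  ‖Matrix.toEuclideanCLM (𝕜 := ℂ) A‖

/-- Quantum states: positive semidefinite operators with unit trace. -/
def IsState {ι : Type} [Fintype ι] (ρ : Matrix ι ι ℂ) : Prop :=
  ρ.PosSemidef ∧ ρ.trace = 1

/-- Insert the value `s` at position `i` into a configuration `a` of the remaining qudits. -/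
def ins {d n : ℕ} (i : Fin n) (a : {j : Fin n // j ≠ i} → Fin d) (s : Fin d) : Cfg d n :=
  fun j => if h : j = i then s else a ⟨j, h⟩

/-- The partial trace over the `i`-th qudit. -/
noncomputable def ptrace {d n : ℕ} (i : Fin n) (X : Mat d n) :
    Matrix ({j : Fin n // j ≠ i} → Fin d) ({j : Fin n // j ≠ i} → Fin d) ℂ :=
  fun a b => ∑ s : Fin d, X (ins i a s) (ins i b s)

/-- The marginal of `ρ` on the `i`-th qudit (partial trace over all the other qudits). -/
noncomputable def marginal {d n : ℕ} (i : Fin n) (ρ : Mat d n) :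
    Matrix (Fin d) (Fin d) ℂ :=
  fun s t => ∑ a : ({j : Fin n // j ≠ i} → Fin d), ρ (ins i a s) (ins i a t)

/-- Combine a configuration `s` of the qudits in `I` with a configuration `a` of the rest. -/
def insSet {d n : ℕ} (I : Finset (Fin n)) (a : {j : Fin n // j ∉ I} → Fin d)
    (s : {j : Fin n // j ∈ I} → Fin d) : Cfg d n :=
  fun j => if h : j ∈ I then s ⟨j, h⟩ else a ⟨j, h⟩

/-- The partial trace over the qudits in `I`. -/
noncomputable def ptraceSet {d n : ℕ} (I : Finset (Fin n)) (X : Mat d n) :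
    Matrix ({j : Fin n // j ∉ I} → Fin d) ({j : Fin n // j ∉ I} → Fin d) ℂ :=
  fun a b => ∑ s : ({j : Fin n // j ∈ I} → Fin d), X (insSet I a s) (insSet I b s)

/-- The set of values `(1/2) ∑ i ‖X⁽ⁱ⁾‖₁` over all decompositions `X = ∑ i X⁽ⁱ⁾` with
`X⁽ⁱ⁾` self-adjoint and `Tr_i X⁽ⁱ⁾ = 0`. -/
def W1Set {d n : ℕ} (X : Mat d n) : Set ℝ :=
  { r | ∃ Y : Fin n → Mat d n, (∀ i, (Y i).IsHermitian) ∧ (∀ i, ptrace i (Y i) = 0) ∧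
      X = ∑ i, Y i ∧ r = (1 / 2) * ∑ i, traceNorm (Y i) }

/-- The quantum `W₁` norm. -/
noncomputable def W1 {d n : ℕ} (X : Mat d n) : ℝ := sInf (W1Set X)

/-- The quantum Lipschitz constant: the dual norm of the quantum `W₁` norm. -/
noncomputable def lipschitz {d n : ℕ} (H : Mat d n) : ℝ :=
  sSup { r | ∃ X : Mat d n, X.IsHermitian ∧ X.trace = 0 ∧ W1 X ≤ 1 ∧
    r = ((H * X).trace).re }

/-- Extension `Φ ⊗ id_R` of a map on matrices. -/
def extendMap {A B R : Type} [Fintype A] [Fintype B] [Fintype R]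
    (Φ : Matrix A A ℂ → Matrix B B ℂ) (M : Matrix (A × R) (A × R) ℂ) :
    Matrix (B × R) (B × R) ℂ :=
  fun p q => Φ (fun a a' => M (a, p.2) (a', q.2)) p.1 q.1

/-- Quantum channels: completely positive trace-preserving linear maps. -/
def IsCPTP {A B : Type} [Fintype A] [Fintype B]
    (Φ : Matrix A A ℂ →ₗ[ℂ] Matrix B B ℂ) : Prop :=
  (∀ (k : ℕ) (M : Matrix (A × Fin k) (A × Fin k) ℂ), M.PosSemidef →
    (extendMap (fun N => Φ N) M).PosSemidef) ∧
  ∀ M, (Φ M).trace = M.trace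

/-- Action `φ_i ⊗ id` of a single-qudit map `φ` on the `i`-th qudit of `n` qudits. -/
def applyAt {d n : ℕ} (i : Fin n) (φ : Matrix (Fin d) (Fin d) ℂ → Matrix (Fin d) (Fin d) ℂ)
    (X : Mat d n) : Mat d n :=
  fun a b => φ (fun s t => X (Function.update a i s) (Function.update b i t)) (a i) (b i)

/-- Action `φ_I ⊗ id` of a map `φ` on the qudits in `I`. -/
def applyOn {d n : ℕ} (I : Finset (Fin n))
    (φ : Matrix ({j : Fin n // j ∈ I} → Fin d) ({j : Fin n // j ∈ I} → Fin d) ℂ →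
         Matrix ({j : Fin n // j ∈ I} → Fin d) ({j : Fin n // j ∈ I} → Fin d) ℂ)
    (X : Mat d n) : Mat d n :=
  fun a b =>
    φ (fun s t => X (insSet I (fun j => a j) s) (insSet I (fun j => b j) t))
      (fun j => a j) (fun j => b j)

/-- The operator obtained from `X` by permuting the tensor factors according to `π`. -/
def permuteMat {d n : ℕ} (π : Equiv.Perm (Fin n)) (X : Mat d n) : Mat d n :=
  fun a b => X (a ∘ π) (b ∘ π)

/-- Tensor product of an operator on the first `m` qudits with one on the last `n` qudits. -/
def tensorMN {d m n : ℕ} (A : Mat d m) (B : Mat d n) : Mat d (m + n) :=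
  fun a b =>
    A (fun i => a (Fin.castAdd n i)) (fun i => b (Fin.castAdd n i)) *
    B (fun j => a (Fin.natAdd m j)) (fun j => b (Fin.natAdd m j))

/-- Partial trace of an operator on `m + n` qudits over the last `n` qudits. -/
noncomputable def ptraceLast {d m n : ℕ} (X : Mat d (m + n)) : Mat d m :=
  fun a b => ∑ k : Cfg d n, X (Fin.append a k) (Fin.append b k)

/-- Partial trace of an operator on `m + n` qudits over the first `m` qudits. -/
noncomputable def ptraceFirst {d m n : ℕ} (X : Mat d (m + n)) : Mat d n :=
  fun a b => ∑ k : Cfg d m, X (Fin.append k a) (Fin.append k b)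

/-- `n`-fold tensor product `σ₁ ⊗ ⋯ ⊗ σₙ` of single-qudit operators. -/
def tensorAll {d n : ℕ} (σs : Fin n → Matrix (Fin d) (Fin d) ℂ) : Mat d n :=
  fun a b => ∏ i, σs i (a i) (b i)

/-- `I_d^{(i)} ⊗ K`: the identity on the `i`-th qudit tensored with an operator `K`
on the remaining qudits. -/
def idTensorAt {d n : ℕ} (i : Fin n)
    (K : Matrix ({j : Fin n // j ≠ i} → Fin d) ({j : Fin n // j ≠ i} → Fin d) ℂ) :
    Mat d n :=
  fun a b => if a i = b i then K (fun j => a j) (fun j => b j) else 0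

/-- `K ⊗ identity`: an operator acting only on the qudits in `I`. -/
def embedOn {d n : ℕ} (I : Finset (Fin n))
    (K : Matrix ({j : Fin n // j ∈ I} → Fin d) ({j : Fin n // j ∈ I} → Fin d) ℂ) :
    Mat d n :=
  fun a b => if (∀ j, j ∉ I → a j = b j) then K (fun j => a j) (fun j => b j) else 0

/-- The `n`-th tensor power `φ^{⊗n}` of a single-qudit linear map `φ`. -/
noncomputable def tensorPowMap {d n : ℕ}
    (φ : Matrix (Fin d) (Fin d) ℂ → Matrix (Fin d) (Fin d) ℂ) (X : Mat d n) : Mat d n :=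
  fun a b => ∑ s : Cfg d n, ∑ t : Cfg d n,
    X s t * ∏ j, φ (Matrix.single (s j) (t j) 1) (a j) (b j)

/-- The `1 → 1` norm of a map on single-qudit operators. -/
noncomputable def norm1to1 {d : ℕ}
    (F : Matrix (Fin d) (Fin d) ℂ → Matrix (Fin d) (Fin d) ℂ) : ℝ :=
  sSup { r | ∃ ρ : Matrix (Fin d) (Fin d) ℂ, IsState ρ ∧ r = traceNorm (F ρ) }

/-- The diamond norm of a map on single-qudit operators. -/
noncomputable def diamondNorm {d : ℕ}
    (F : Matrix (Fin d) (Fin d) ℂ → Matrix (Fin d) (Fin d) ℂ) : ℝ :=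
  sSup { r | ∃ ρ : Matrix (Fin d × Fin d) (Fin d × Fin d) ℂ, IsState ρ ∧
    r = traceNorm (extendMap F ρ) }

/-- The contraction coefficient (`W₁ → W₁` norm) of a map on `n`-qudit operators. -/
noncomputable def W1toW1 {d n : ℕ} (Φ : Mat d n → Mat d n) : ℝ :=
  sSup { r | ∃ X : Mat d n, X.IsHermitian ∧ X.trace = 0 ∧ W1 X ≤ 1 ∧ r = W1 (Φ X) }

/-- The von Neumann entropy `S(ρ) = -Tr[ρ ln ρ]` (natural logarithm). -/
noncomputable def vnEntropy {ι : Type} [Fintype ι] [DecidableEq ι] (ρ : Matrix ι ι ℂ) : ℝ :=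
  if h : ρ.IsHermitian then -∑ i, h.eigenvalues i * Real.log (h.eigenvalues i) else 0

/-- The logarithm of a self-adjoint matrix, via the spectral decomposition. -/
noncomputable def matLog {ι : Type} [Fintype ι] [DecidableEq ι] (ρ : Matrix ι ι ℂ) :
    Matrix ι ι ℂ :=
  if h : ρ.IsHermitian then
    (h.eigenvectorUnitary : Matrix ι ι ℂ) *
      Matrix.diagonal (fun i => (Real.log (h.eigenvalues i) : ℂ)) *
      (star (h.eigenvectorUnitary : Matrix ι ι ℂ))
  else 0

/-- The quantum relative entropy `S(ρ‖σ) = Tr[ρ (ln ρ - ln σ)]`. -/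
noncomputable def relEntropy {ι : Type} [Fintype ι] [DecidableEq ι]
    (ρ σ : Matrix ι ι ℂ) : ℝ :=
  ((ρ * (matLog ρ - matLog σ)).trace).re

/-- The Hamming distance between two configurations. -/
def hamming {d n : ℕ} (x y : Cfg d n) : ℕ :=
  (Finset.univ.filter (fun i => x i ≠ y i)).card

/-- Probability distributions on a finite set. -/
def IsProb {α : Type} [Fintype α] (p : α → ℝ) : Prop :=
  (∀ x, 0 ≤ p x) ∧ ∑ x, p x = 1

/-- Couplings of two probability distributions. -/
def IsCoupling {α : Type} [Fintype α] (π : α × α → ℝ) (p q : α → ℝ) : Prop :=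
  IsProb π ∧ (∀ x, ∑ y, π (x, y) = p x) ∧ (∀ y, ∑ x, π (x, y) = q y)

/-- The classical Wasserstein distance of order 1 with respect to the Hamming distance. -/
noncomputable def classicalW1 {d n : ℕ} (p q : Cfg d n → ℝ) : ℝ :=
  sInf { c | ∃ π : Cfg d n × Cfg d n → ℝ, IsCoupling π p q ∧
    c = ∑ x : Cfg d n, ∑ y : Cfg d n, (hamming x y : ℝ) * π (x, y) }

/-- The Lipschitz constant of a function on `[d]^n` with respect to the Hamming distance. -/
noncomputable def classicalLip {d n : ℕ} (f : Cfg d n → ℝ) : ℝ :=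
  sSup { r | ∃ x y : Cfg d n, x ≠ y ∧ r = |f x - f y| / (hamming x y : ℝ) }

/-!
Upper bound: if `Tr_i Y = 0`, the diagonal of `Y` sums to zero on every fibre of the `i`-th
coordinate, on which `f` oscillates by at most `‖f‖_L`; subtracting the midrange of `f` on each
fibre gives `Tr[F Y] ≤ ‖f‖_L ‖Y‖₁ / 2`, and summing over a decomposition of `X` gives
`Tr[F X] ≤ ‖f‖_L ‖X‖_{W1}`. That every traceless `X` has such a decomposition at all follows by
telescoping the successive depolarisations of qudits `0, …, n - 1`.

Lower bound: `(|x⟩⟨x| - |y⟩⟨y|) / h(x, y)` has `W1` norm at most one, as the mass can be moved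
from `x` to `y` by changing one differing coordinate at a time, and it pairs with `F` to
`(f x - f y) / h(x, y)`.
-/

section TraceNorm

open Matrix

lemma isHermitian_diagonal_ofReal {ι : Type*} [DecidableEq ι] (c : ι → ℝ) :
    (diagonal fun z => (c z : ℂ)).IsHermitian := by
  simpa [Function.comp_def] using isHermitian_diagonal_of_self_adjoint _
    (by ext z; simp : star (RCLike.ofReal ∘ c : ι → ℂ) = RCLike.ofReal ∘ c)

variable {ι : Type} [Fintype ι] [DecidableEq ι]

/-- By functional calculus, `√(Aᴴ A) = √(A ^ 2) = |A|` for self-adjoint `A`. -/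
lemma traceNorm_eq_sum_abs_eigenvalues {A : Matrix ι ι ℂ} (hA : A.IsHermitian) :
    traceNorm A = ∑ k, |hA.eigenvalues k| := by
  have hB := (posSemidef_conjTranspose_mul_self A).1
  have h_sqrt : traceNorm A = (cfc Real.sqrt (Aᴴ * A)).trace.re := by
    rw [traceNorm, hB.cfc_eq, IsHermitian.cfc, Unitary.conjStarAlgAut_apply]
    rfl
  have h_sq : Aᴴ * A = cfc (fun x : ℝ => x ^ 2) A := by
    rw [cfc_pow_id A 2 hA.isSelfAdjoint, hA.eq, sq]
  have h_abs : (Real.sqrt ∘ fun x : ℝ => x ^ 2) = fun x => |x| := by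
    funext x
    exact Real.sqrt_sq_eq_abs x
  rw [h_sqrt, h_sq, ← cfc_comp Real.sqrt (fun x : ℝ => x ^ 2) A hA.isSelfAdjoint, h_abs,
    hA.cfc_eq, IsHermitian.cfc, Unitary.conjStarAlgAut_apply, trace_mul_cycle]
  simp [trace_diagonal, Complex.re_sum]

lemma traceNorm_nonneg (A : Matrix ι ι ℂ) : 0 ≤ traceNorm A := by
  rw [traceNorm, trace_mul_cycle]
  simpa [trace_diagonal, Complex.re_sum] using
    Finset.sum_nonneg fun i _ => Real.sqrt_nonneg _

lemma re_trace_diagonal_mul (c : ι → ℝ) (Y : Matrix ι ι ℂ) :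
    ((diagonal fun z => (c z : ℂ)) * Y).trace.re = ∑ z, c z * (Y z z).re := by
  simp [trace, diagonal_mul, Complex.re_sum]

lemma traceNorm_diagonal (c : ι → ℝ) :
    traceNorm (diagonal fun z => (c z : ℂ)) = ∑ z, |c z| := by
  have hD := isHermitian_diagonal_ofReal c
  have h_roots : Multiset.map (fun k => ((hD.eigenvalues k : ℝ) : ℂ)) Finset.univ.val
      = Multiset.map (fun z => (c z : ℂ)) Finset.univ.val := by
    have h := hD.roots_charpoly_eq_eigenvalues
    rw [charpoly_diagonal, Polynomial.roots_prod _ _ (by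
      simp [Finset.prod_ne_zero_iff, Polynomial.X_sub_C_ne_zero])] at h
    simpa using h.symm
  have := congrArg (fun m => (m.map fun z : ℂ => |z.re|).sum) h_roots
  simpa [Multiset.map_map, traceNorm_eq_sum_abs_eigenvalues hD] using this

lemma traceNorm_zero : traceNorm (0 : Matrix ι ι ℂ) = 0 := by
  simpa using traceNorm_diagonal (0 : ι → ℝ)

/-- Each diagonal entry is a convex combination of the eigenvalues, with weights `|U z k|²`. -/
lemma sum_abs_re_diag_le_traceNorm {A : Matrix ι ι ℂ} (hA : A.IsHermitian) :
    ∑ z, |(A z z).re| ≤ traceNorm A := by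
  set U : Matrix ι ι ℂ := (hA.eigenvectorUnitary : Matrix ι ι ℂ)
  set e := hA.eigenvalues
  have h_diag : ∀ z, (A z z).re = ∑ k, e k * Complex.normSq (U z k) := by
    intro z
    conv_lhs => rw [hA.spectral_theorem, Unitary.conjStarAlgAut_apply]
    rw [mul_apply, Complex.re_sum]
    simp only [mul_diagonal, star_apply, Function.comp_apply]
    refine Finset.sum_congr rfl fun k _ => ?_
    rw [mul_right_comm, Complex.star_def, Complex.mul_conj]
    simp [U, e, mul_comm]
  have h_col : ∀ k, ∑ z, Complex.normSq (U z k) = 1 := by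
    intro k
    have h := congrArg (fun M => (M k k).re) (UnitaryGroup.star_mul_self hA.eigenvectorUnitary)
    simpa [mul_apply, Complex.re_sum, Complex.normSq_apply, U, mul_comm] using h
  calc ∑ z, |(A z z).re| ≤ ∑ z, ∑ k, |e k| * Complex.normSq (U z k) := by
        refine Finset.sum_le_sum fun z _ => ?_
        rw [h_diag z]
        refine (Finset.abs_sum_le_sum_abs _ _).trans_eq ?_
        simp [abs_mul, abs_of_nonneg (Complex.normSq_nonneg _)]
    _ = ∑ k, |e k| := by
        rw [Finset.sum_comm]
        simp [← Finset.mul_sum, h_col]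
    _ = traceNorm A := (traceNorm_eq_sum_abs_eigenvalues hA).symm

end TraceNorm

section Ins

variable {d n : ℕ}

@[simp]
lemma ins_apply_self (i : Fin n) (a : {j : Fin n // j ≠ i} → Fin d) (s : Fin d) :
    ins i a s i = s := by
  simp [ins]

lemma ins_apply_of_ne {i j : Fin n} (h : j ≠ i) (a : {j : Fin n // j ≠ i} → Fin d) (s : Fin d) :
    ins i a s j = a ⟨j, h⟩ := by
  simp [ins, h]

lemma funSplitAt_symm_apply_eq_ins (i : Fin n) (s : Fin d) (a : {j : Fin n // j ≠ i} → Fin d) :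
    (Equiv.funSplitAt i (Fin d)).symm (s, a) = ins i a s := by
  funext j
  by_cases h : j = i
  · subst h
    simp [Equiv.funSplitAt, Equiv.piSplitAt]
  · simp [Equiv.funSplitAt, Equiv.piSplitAt, h, ins_apply_of_ne h]

lemma ins_eq_iff (i : Fin n) (a : {j : Fin n // j ≠ i} → Fin d) (s : Fin d) (w : Cfg d n) :
    ins i a s = w ↔ s = w i ∧ a = fun j : {j : Fin n // j ≠ i} => w j := by
  rw [← funSplitAt_symm_apply_eq_ins, Equiv.symm_apply_eq]
  simp [Equiv.funSplitAt, Equiv.piSplitAt]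

lemma sum_cfg_eq_sum_sum_ins {M : Type*} [AddCommMonoid M] (i : Fin n) (g : Cfg d n → M) :
    ∑ z, g z = ∑ a : {j : Fin n // j ≠ i} → Fin d, ∑ s, g (ins i a s) := by
  rw [← (Equiv.funSplitAt i (Fin d)).symm.sum_comp, Fintype.sum_prod_type, Finset.sum_comm]
  simp only [funSplitAt_symm_apply_eq_ins]

lemma ins_eq_update (i : Fin n) (a : {j : Fin n // j ≠ i} → Fin d) (s t : Fin d) :
    ins i a t = Function.update (ins i a s) i t := by
  funext j
  by_cases h : j = i
  · subst h
    simp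
  · simp [h, ins_apply_of_ne h]

lemma hamming_comm (x y : Cfg d n) : hamming x y = hamming y x :=
  hammingDist_comm x y

lemma hammingDist_update_le_one {ι β : Type*} [Fintype ι] [DecidableEq ι] [DecidableEq β]
    (x : ι → β) (i : ι) (t : β) : hammingDist x (Function.update x i t) ≤ 1 := by
  refine (Finset.card_le_card fun j hj => ?_).trans (Finset.card_singleton i).le
  by_contra h
  simp_all

lemma hammingDist_ins_le_one (i : Fin n) (a : {j : Fin n // j ≠ i} → Fin d) (s t : Fin d) :
    hammingDist (ins i a s) (ins i a t) ≤ 1 := by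
  rw [ins_eq_update i a s t]
  exact hammingDist_update_le_one ..

lemma ptrace_sub (i : Fin n) (A B : Mat d n) : ptrace i (A - B) = ptrace i A - ptrace i B := by
  ext a b
  simp [ptrace, Finset.sum_sub_distrib]

lemma ptrace_diagonal (i : Fin n) (g : Cfg d n → ℂ) (a b : {j : Fin n // j ≠ i} → Fin d) :
    ptrace i (Matrix.diagonal g) a b = if a = b then ∑ s, g (ins i a s) else 0 := by
  split_ifs with hab
  · subst hab
    simp [ptrace]
  · refine Finset.sum_eq_zero fun s _ => Matrix.diagonal_apply_ne _ fun h => hab ?_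
    exact ((ins_eq_iff i a s _).mp h).2.trans (funext fun j => ins_apply_of_ne j.2 b s)

end Ins

lemma Fintype.sum_sum_update {ι β M : Type*} [DecidableEq ι] [Fintype β] [Fintype (ι → β)]
    [AddCommMonoid M] (i : ι) (F : (ι → β) → β → M) :
    ∑ s, ∑ t, F (Function.update s i t) (s i) = ∑ s, ∑ t, F s t := by
  have h_inv : Function.Involutive fun p : (ι → β) × β => (Function.update p.1 i p.2, p.1 i) := by
    rintro ⟨s, t⟩
    simp
  simp only [← Fintype.sum_prod_type']
  exact Fintype.sum_equiv h_inv.toPerm _ _ fun _ => rfl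

section Depolarize

variable {d n : ℕ}

/-- The depolarisation `(𝟙/d)^{⊗ I} ⊗ Tr_I X` of the qudits in `I`. The sum runs over all of
`Cfg d n` although only `s` on `I` matters; the surplus factor `d ^ (n - #I)` is absorbed by
normalising with `d ^ n = card (Cfg d n)` instead of `d ^ #I`. -/
def depolarize (I : Finset (Fin n)) (X : Mat d n) : Mat d n :=
  fun a b => if ∀ j ∈ I, a j = b j then
    (Fintype.card (Cfg d n) : ℂ)⁻¹ * ∑ s : Cfg d n, X (I.piecewise s a) (I.piecewise s b)
  else 0

lemma depolarize_empty (X : Mat d n) : depolarize ∅ X = X := by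
  ext a b
  have : Nonempty (Cfg d n) := ⟨a⟩
  rw [depolarize, if_pos (by simp)]
  simp only [Finset.piecewise_empty, Finset.sum_const, Finset.card_univ, nsmul_eq_mul]
  exact inv_mul_cancel_left₀ (by exact_mod_cast Fintype.card_ne_zero) _

lemma depolarize_univ {X : Mat d n} (hX : X.trace = 0) : depolarize Finset.univ X = 0 := by
  ext a b
  have h_sum : ∑ s, X s s = 0 := hX
  simp [depolarize, h_sum]

lemma isHermitian_depolarize {X : Mat d n} (hX : X.IsHermitian) (I : Finset (Fin n)) :
    (depolarize I X).IsHermitian := by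
  refine Matrix.IsHermitian.ext fun a b => ?_
  simp only [depolarize, eq_comm (a := b _)]
  split_ifs
  · simp [star_sum, hX.apply]
  · simp

lemma forall_mem_insert_ins_iff {I : Finset (Fin n)} {i : Fin n} (hi : i ∉ I)
    (a b : {j : Fin n // j ≠ i} → Fin d) (t t' : Fin d) :
    (∀ j ∈ insert i I, ins i a t j = ins i b t j) ↔ ∀ j ∈ I, ins i a t' j = ins i b t' j := by
  refine Finset.forall_mem_insert .. |>.trans ?_
  simp only [ins_apply_self, true_and]
  refine forall₂_congr fun j hj => ?_
  have hji : j ≠ i := fun h => hi (h ▸ hj)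
  simp [ins_apply_of_ne hji]

lemma piecewise_insert_update {I : Finset (Fin n)} {i : Fin n} (hi : i ∉ I) (s w : Cfg d n)
    (t : Fin d) :
    (insert i I).piecewise (Function.update s i t) w = I.piecewise s (Function.update w i t) := by
  rw [Finset.piecewise_insert, Function.update_self, ← Finset.update_piecewise_of_notMem _ _ _ hi]
  congr 1
  exact I.piecewise_congr (fun j hj => Function.update_of_ne (by rintro rfl; exact hi hj) ..)
    fun _ _ => rfl

/-- Reindexing by `(s, t) ↦ (update s i t, s i)` turns one side into the other. -/
lemma ptrace_depolarize_insert {I : Finset (Fin n)} {i : Fin n} (hi : i ∉ I) (X : Mat d n) :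
    ptrace i (depolarize (insert i I) X) = ptrace i (depolarize I X) := by
  ext a b
  let F : Cfg d n → Fin d → ℂ := fun s t =>
    if ∀ j ∈ insert i I, ins i a t j = ins i b t j then
      X ((insert i I).piecewise s (ins i a t)) ((insert i I).piecewise s (ins i b t))
    else 0
  have h_swap : ∀ s t,
      F (Function.update s i t) (s i) = if ∀ j ∈ I, ins i a t j = ins i b t j then
        X (I.piecewise s (ins i a t)) (I.piecewise s (ins i b t)) else 0 := by
    intro s t
    simp only [F, forall_mem_insert_ins_iff hi a b (s i) t, piecewise_insert_update hi,
      ← ins_eq_update]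
  have h_unfold : ∀ (J : Finset (Fin n)) (G : Cfg d n → Fin d → ℂ),
      (∀ s t, G s t = if ∀ j ∈ J, ins i a t j = ins i b t j then
        X (J.piecewise s (ins i a t)) (J.piecewise s (ins i b t)) else 0) →
      ptrace i (depolarize J X) a b = (Fintype.card (Cfg d n) : ℂ)⁻¹ * ∑ s, ∑ t, G s t := by
    intro J G hG
    simp only [hG, ptrace, depolarize, Finset.sum_comm (γ := Cfg d n), Finset.mul_sum]
    refine Finset.sum_congr rfl fun t _ => ?_
    split_ifs <;> simp
  rw [h_unfold _ F fun _ _ => rfl, h_unfold _ _ h_swap, Fintype.sum_sum_update]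

end Depolarize

section W1

variable {d n : ℕ}

lemma nonneg_of_mem_W1Set {X : Mat d n} {r : ℝ} (hr : r ∈ W1Set X) : 0 ≤ r := by
  obtain ⟨Y, -, -, -, rfl⟩ := hr
  have := Finset.sum_nonneg fun i (_ : i ∈ Finset.univ) => traceNorm_nonneg (Y i)
  positivity

lemma W1_le_of_mem {X : Mat d n} {r : ℝ} (hr : r ∈ W1Set X) : W1 X ≤ r :=
  csInf_le ⟨0, fun _ => nonneg_of_mem_W1Set⟩ hr

lemma nonempty_W1Set {X : Mat d n} (hX : X.IsHermitian) (htr : X.trace = 0) :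
    (W1Set X).Nonempty := by
  let S : ℕ → Finset (Fin n) := fun k => Finset.univ.filter fun j => (j : ℕ) < k
  let P : ℕ → Mat d n := fun k => depolarize (S k) X
  have h_succ (i : Fin n) : S (i + 1) = insert i (S i) := by
    ext j
    simp only [S, Finset.mem_filter, Finset.mem_univ, true_and, Finset.mem_insert, Fin.ext_iff]
    omega
  refine ⟨_, fun i => P i - P (i + 1),
    fun i => (isHermitian_depolarize hX _).sub (isHermitian_depolarize hX _), fun i => ?_, ?_, rfl⟩
  · rw [ptrace_sub, show P (i + 1) = depolarize (S (i + 1)) X from rfl, h_succ,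
      ptrace_depolarize_insert (by simp [S]), sub_self]
  · rw [Fin.sum_univ_eq_sum_range (fun k => P k - P (k + 1)), Finset.sum_range_sub']
    have h_zero : P 0 = X := by simpa [P, S] using depolarize_empty X
    have h_top : P n = 0 := by simpa [P, S] using depolarize_univ htr
    rw [h_zero, h_top, sub_zero]

end W1

lemma sum_mul_le_half_mul_sum_abs {ι : Type*} [Fintype ι] {g w : ι → ℝ} {L : ℝ}
    (hw : ∑ s, w s = 0) (hg : ∀ s t, g s - g t ≤ L) :
    ∑ s, g s * w s ≤ L / 2 * ∑ s, |w s| := by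
  cases isEmpty_or_nonempty ι
  · simp
  obtain ⟨s_max, h_max⟩ := Finite.exists_max g
  obtain ⟨s_min, h_min⟩ := Finite.exists_min g
  have h_mid : ∀ s, |g s - (g s_max + g s_min) / 2| ≤ L / 2 := fun s => by
    have := hg s_max s_min
    rw [abs_le]
    constructor <;> linarith [h_max s, h_min s]
  calc ∑ s, g s * w s = ∑ s, (g s - (g s_max + g s_min) / 2) * w s := by
        simp [sub_mul, Finset.sum_sub_distrib, ← Finset.mul_sum, hw]
    _ ≤ ∑ s, L / 2 * |w s| := Finset.sum_le_sum fun s _ => (le_abs_self _).trans <|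
        (abs_mul _ _).trans_le (mul_le_mul_of_nonneg_right (h_mid s) (abs_nonneg _))
    _ = L / 2 * ∑ s, |w s| := Finset.mul_sum .. |>.symm

section Lipschitz

variable {d n : ℕ}

lemma classicalLip_nonneg (f : Cfg d n → ℝ) : 0 ≤ classicalLip f :=
  Real.sSup_nonneg <| by
    rintro _ ⟨x, y, -, rfl⟩
    positivity

lemma abs_sub_le_classicalLip_mul (f : Cfg d n → ℝ) (x y : Cfg d n) :
    |f x - f y| ≤ classicalLip f * hamming x y := by
  obtain rfl | hxy := eq_or_ne x y
  · simpa using mul_nonneg (classicalLip_nonneg f) (Nat.cast_nonneg _)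
  have h_bdd : BddAbove {r | ∃ x y : Cfg d n, x ≠ y ∧ r = |f x - f y| / (hamming x y : ℝ)} :=
    (Set.finite_range fun p : Cfg d n × Cfg d n => |f p.1 - f p.2| / (hamming p.1 p.2 : ℝ)).subset
      (by rintro _ ⟨x, y, -, rfl⟩; exact ⟨(x, y), rfl⟩) |>.bddAbove
  have h_pos : (0 : ℝ) < hamming x y := by exact_mod_cast hammingDist_pos.2 hxy
  exact (div_le_iff₀ h_pos).1 (le_csSup h_bdd ⟨x, y, hxy, rfl⟩)

lemma re_trace_diagonal_mul_le {f : Cfg d n → ℝ} {L : ℝ} (hL : 0 ≤ L)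
    (hf : ∀ x y, |f x - f y| ≤ L * hamming x y) {Y : Mat d n} (hY : Y.IsHermitian) {i : Fin n}
    (hY_i : ptrace i Y = 0) :
    ((Matrix.diagonal fun x => (f x : ℂ)) * Y).trace.re ≤ L / 2 * traceNorm Y := by
  have h_fibre : ∀ a, ∑ s, (Y (ins i a s) (ins i a s)).re = 0 := fun a => by
    simpa [ptrace, Complex.re_sum] using congrArg Complex.re (congrFun (congrFun hY_i a) a)
  have h_osc : ∀ a s t, f (ins i a s) - f (ins i a t) ≤ L := fun a s t => by
    have h_one : (hamming (ins i a s) (ins i a t) : ℝ) ≤ 1 := by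
      exact_mod_cast hammingDist_ins_le_one i a s t
    nlinarith [le_abs_self (f (ins i a s) - f (ins i a t)), hf (ins i a s) (ins i a t)]
  calc ((Matrix.diagonal fun x => (f x : ℂ)) * Y).trace.re
      = ∑ a, ∑ s, f (ins i a s) * (Y (ins i a s) (ins i a s)).re := by
        rw [re_trace_diagonal_mul, sum_cfg_eq_sum_sum_ins i]
    _ ≤ ∑ a, L / 2 * ∑ s, |(Y (ins i a s) (ins i a s)).re| :=
        Finset.sum_le_sum fun a _ => sum_mul_le_half_mul_sum_abs (h_fibre a) (h_osc a)
    _ = L / 2 * ∑ z, |(Y z z).re| := by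
        rw [← Finset.mul_sum, sum_cfg_eq_sum_sum_ins i]
    _ ≤ L / 2 * traceNorm Y :=
        mul_le_mul_of_nonneg_left (sum_abs_re_diag_le_traceNorm hY) (by positivity)

lemma re_trace_diagonal_mul_le_mul_W1 {f : Cfg d n → ℝ} {L : ℝ} (hL : 0 ≤ L)
    (hf : ∀ x y, |f x - f y| ≤ L * hamming x y) {X : Mat d n} (hX : X.IsHermitian)
    (hX_tr : X.trace = 0) :
    ((Matrix.diagonal fun x => (f x : ℂ)) * X).trace.re ≤ L * W1 X := by
  have h_dec : ∀ r ∈ W1Set X, ((Matrix.diagonal fun x => (f x : ℂ)) * X).trace.re ≤ L * r := by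
    rintro _ ⟨Y, hY, hY_tr, rfl, rfl⟩
    calc ((Matrix.diagonal fun x => (f x : ℂ)) * ∑ i, Y i).trace.re
        = ∑ i, ((Matrix.diagonal fun x => (f x : ℂ)) * Y i).trace.re := by
          rw [Finset.mul_sum, Matrix.trace_sum, Complex.re_sum]
      _ ≤ ∑ i, L / 2 * traceNorm (Y i) :=
          Finset.sum_le_sum fun i _ => re_trace_diagonal_mul_le hL hf (hY i) (hY_tr i)
      _ = L * (1 / 2 * ∑ i, traceNorm (Y i)) := by
          rw [← Finset.mul_sum]
          ring
  rw [W1, ← smul_eq_mul (a := L), ← Real.sInf_smul_of_nonneg hL]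
  refine le_csInf (nonempty_W1Set hX hX_tr).smul_set ?_
  rintro _ ⟨r, hr, rfl⟩
  exact h_dec r hr

end Lipschitz

section Dipole

variable {d n : ℕ}

lemma sum_abs_single_sub_single {ι : Type*} [Fintype ι] [DecidableEq ι] (u v : ι) (t : ℝ) :
    ∑ z, |(Pi.single u t - Pi.single v t : ι → ℝ) z| = if u = v then 0 else 2 * |t| := by
  split_ifs with huv
  · simp [huv]
  rw [Fintype.sum_eq_add u v huv fun z hz => by simp [hz.1, hz.2]]
  simp [huv, Ne.symm huv, two_mul]

lemma sum_single_ins (i : Fin n) (a : {j : Fin n // j ≠ i} → Fin d) (u : Cfg d n) (t : ℝ) :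
    ∑ s, (Pi.single u t : Cfg d n → ℝ) (ins i a s)
      = if a = fun j : {j : Fin n // j ≠ i} => u j then t else 0 := by
  simp only [Pi.single_apply, ins_eq_iff]
  split_ifs with ha <;> simp [ha]

lemma zero_mem_W1Set : (0 : ℝ) ∈ W1Set (0 : Mat d n) := by
  refine ⟨0, fun _ => Matrix.isHermitian_zero, fun i => ?_, by simp, ?_⟩
  · ext a b
    simp [ptrace]
  · simp [traceNorm_zero]

lemma mem_W1Set_diagonal_single_sub_single (x y : Cfg d n) (t : ℝ) :
    |t| * hamming x y ∈
      W1Set (Matrix.diagonal fun z => ((Pi.single x t - Pi.single y t : Cfg d n → ℝ) z : ℂ)) := by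
  let U : ℕ → Cfg d n := fun k j => if (j : ℕ) < k then y j else x j
  let q : Fin n → Cfg d n → ℝ := fun i => Pi.single (U i) t - Pi.single (U (i + 1)) t
  have h_off (i : Fin n) :
      (fun j : {j : Fin n // j ≠ i} => U i j) = fun j : {j : Fin n // j ≠ i} => U (i + 1) j := by
    funext ⟨j, hj⟩
    have : (j : ℕ) ≠ i := Fin.val_ne_of_ne hj
    simp only [U]
    split_ifs <;> first | rfl | omega
  have h_step (i : Fin n) : U i = U (i + 1) ↔ x i = y i := by
    refine ⟨fun h => by simpa [U] using congrFun h i, fun h => funext fun j => ?_⟩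
    obtain rfl | hj := eq_or_ne j i
    · simpa [U] using h
    · exact congrFun (h_off i) ⟨j, hj⟩
  have h_tel : ∑ i, q i = Pi.single x t - Pi.single y t := by
    refine (Fin.sum_univ_eq_sum_range
      (fun k => (Pi.single (U k) t - Pi.single (U (k + 1)) t : Cfg d n → ℝ)) n).trans ?_
    have h_start : U 0 = x := funext fun j => by simp [U]
    have h_end : U n = y := funext fun j => by simp [U]
    rw [Finset.sum_range_sub', h_start, h_end]
  refine ⟨fun i => Matrix.diagonal fun z => (q i z : ℂ),
    fun i => isHermitian_diagonal_ofReal _, fun i => ?_, ?_, ?_⟩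
  · ext a b
    rw [ptrace_diagonal, Matrix.zero_apply]
    split_ifs
    · simp only [q, Pi.sub_apply, Complex.ofReal_sub, Finset.sum_sub_distrib, ← Complex.ofReal_sum,
        sum_single_ins, h_off, sub_self]
    · rfl
  · ext a b
    rw [← h_tel]
    by_cases hab : a = b
    · simp [hab, Matrix.sum_apply]
    · simp [hab, Matrix.sum_apply, Matrix.diagonal_apply_ne]
  · simp only [traceNorm_diagonal, q, sum_abs_single_sub_single, h_step]
    simp [Finset.sum_ite, hamming]
    ring

end Dipole

section Main

variable {d n : ℕ}

lemma re_trace_diagonal_mul_le_classicalLip (f : Cfg d n → ℝ) {X : Mat d n}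
    (hX : X.IsHermitian) (hX_tr : X.trace = 0) (hX_W1 : W1 X ≤ 1) :
    ((Matrix.diagonal fun x => (f x : ℂ)) * X).trace.re ≤ classicalLip f :=
  (re_trace_diagonal_mul_le_mul_W1 (classicalLip_nonneg f) (abs_sub_le_classicalLip_mul f) hX
    hX_tr).trans (mul_le_of_le_one_right (classicalLip_nonneg f) hX_W1)

lemma exists_re_trace_diagonal_mul_eq_sub_div_hamming (f : Cfg d n → ℝ) {x y : Cfg d n}
    (hxy : x ≠ y) :
    ∃ X : Mat d n, X.IsHermitian ∧ X.trace = 0 ∧ W1 X ≤ 1 ∧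
      (f x - f y) / hamming x y = ((Matrix.diagonal fun x => (f x : ℂ)) * X).trace.re := by
  have h_pos : (0 : ℝ) < hamming x y := by exact_mod_cast hammingDist_pos.2 hxy
  let c : Cfg d n → ℝ := Pi.single x (hamming x y : ℝ)⁻¹ - Pi.single y (hamming x y : ℝ)⁻¹
  refine ⟨Matrix.diagonal fun z => (c z : ℂ), isHermitian_diagonal_ofReal c, ?_, ?_, ?_⟩
  · rw [Matrix.trace_diagonal, ← Complex.ofReal_sum]
    simp [c, Finset.sum_sub_distrib]
  · refine (W1_le_of_mem (mem_W1Set_diagonal_single_sub_single x y _)).trans_eq ?_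
    rw [abs_inv, abs_of_pos h_pos, inv_mul_cancel₀ h_pos.ne']
  · rw [re_trace_diagonal_mul]
    simp [c, mul_sub, Finset.sum_sub_distrib, div_eq_mul_inv, sub_mul, Pi.single_apply]

end Main

theorem stmt9_general {d n : ℕ} (f : Cfg d n → ℝ) :
    lipschitz (Matrix.diagonal (fun x => (f x : ℂ)) : Mat d n) = classicalLip f := by
  have h_le : ∀ r ∈ {r | ∃ X : Mat d n, X.IsHermitian ∧ X.trace = 0 ∧ W1 X ≤ 1 ∧
      r = ((Matrix.diagonal (fun x => (f x : ℂ)) * X).trace).re}, r ≤ classicalLip f := by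
    rintro _ ⟨X, hX, hX_tr, hX_W1, rfl⟩
    exact re_trace_diagonal_mul_le_classicalLip f hX hX_tr hX_W1
  refine le_antisymm (Real.sSup_le h_le (classicalLip_nonneg f)) (Real.sSup_le ?_ ?_)
  · rintro _ ⟨x, y, hxy, rfl⟩
    wlog h : f y ≤ f x generalizing x y
    · rw [abs_sub_comm, hamming_comm]
      exact this y x hxy.symm (le_of_not_ge h)
    rw [abs_of_nonneg (sub_nonneg.2 h)]
    exact le_csSup ⟨_, h_le⟩ (exists_re_trace_diagonal_mul_eq_sub_div_hamming f hxy)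
  · refine Real.sSup_nonneg' ⟨0, ⟨0, Matrix.isHermitian_zero, Matrix.trace_zero .., ?_, by simp⟩,
      le_rfl⟩
    exact (W1_le_of_mem zero_mem_W1Set).trans zero_le_one

theorem stmt9 {d n : ℕ} (hd : 2 ≤ d) (hn : 1 ≤ n) (f : Cfg d n → ℝ) :
    lipschitz (Matrix.diagonal (fun x => (f x : ℂ)) : Mat d n) = classicalLip f :=
  stmt9_general f

end QW1
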